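/- For a bilinear form p(x,y) = x^T A y with A ∈ ℝ^{n×n}, viewed as a quadratic form in 2n variables, the completely bounded norm of p equals the completely bounded norm of the matrix A: ‖p‖_cb = ‖A‖_cb. -/

import Mathlib

noncomputable section

/-- `d × d` real matrices, viewed as operators on Euclidean space (with operator norm). -/
abbrev Mat (d : ℕ) := EuclideanSpace ℝ (Fin d) →L[ℝ] EuclideanSpace ℝ (Fin d)

/-- The completely bounded norm of a matrix `M` indexed by a finite type:
`sup ‖∑_{i,j} M_{i,j} A(i) B(j)‖` over contraction-valued maps `A, B`. -/
def matCb {ι : Type} [Fintype ι] (M : Matrix ι ι ℝ) : ℝ :=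
  sSup {c : ℝ | ∃ (d : ℕ) (A B : ι → Mat d),
    (∀ i, ‖A i‖ ≤ 1) ∧ (∀ j, ‖B j‖ ≤ 1) ∧
    c = ‖∑ i : ι, ∑ j : ι, M i j • (A i * B j)‖}


/-! The block matrix `fromBlocks 0 A 0 0` represents `p`, and its operator sums are operator sums
of `A` evaluated on subfamilies, so the infimum is at most `‖A‖_cb`.

Conversely, let `T` represent `p`. For contractions `B i`, `C j` and unit vectors `x`, `y`, the
pairing `⟪y, (∑ A i j • B i * C j) x⟫` is the vector value `∑ A i j * ⟪u i, v j⟫` with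
`u i = (B i)† y` and `v j = C j x`. Applying the identity of quadratic forms coordinatewise turns
it into `∑ T k l * ⟪w k, w l⟫` for `w = Sum.elim u v`, and the rank-one operators
`x ↦ ⟪w k, x⟫ e`, `x ↦ ⟪e, x⟫ w l` (with `e` a unit vector) realize this number, up to sign, as
the norm of an operator sum of `T`. Hence `‖A‖_cb ≤ ‖T‖_cb`. -/

open RealInnerProductSpace InnerProductSpace Matrix

section MatCb

variable {ι : Type} [Fintype ι] (M : Matrix ι ι ℝ)

theorem norm_sum_smul_mul_le_sum_abs {d : ℕ} {A B : ι → Mat d} (hA : ∀ i, ‖A i‖ ≤ 1)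
    (hB : ∀ j, ‖B j‖ ≤ 1) :
    ‖∑ i, ∑ j, M i j • (A i * B j)‖ ≤ ∑ i, ∑ j, |M i j| := by
  refine (norm_sum_le _ _).trans <| Finset.sum_le_sum fun i _ =>
    (norm_sum_le _ _).trans <| Finset.sum_le_sum fun j _ => ?_
  rw [norm_smul, Real.norm_eq_abs]
  exact mul_le_of_le_one_right (abs_nonneg _)
    ((norm_mul_le _ _).trans (mul_le_one₀ (hA i) (norm_nonneg _) (hB j)))

theorem norm_sum_smul_mul_le_matCb {d : ℕ} {A B : ι → Mat d} (hA : ∀ i, ‖A i‖ ≤ 1)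
    (hB : ∀ j, ‖B j‖ ≤ 1) :
    ‖∑ i, ∑ j, M i j • (A i * B j)‖ ≤ matCb M := by
  refine le_csSup ⟨∑ i, ∑ j, |M i j|, ?_⟩ ⟨d, A, B, hA, hB, rfl⟩
  rintro _ ⟨d, A, B, hA, hB, rfl⟩
  exact norm_sum_smul_mul_le_sum_abs M hA hB

theorem matCb_nonneg : 0 ≤ matCb M :=
  (norm_nonneg _).trans <|
    norm_sum_smul_mul_le_matCb M (A := fun _ => (0 : Mat 0)) (B := fun _ => 0) (by simp) (by simp)

theorem matCb_le {c : ℝ}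
    (h : ∀ (d : ℕ) (A B : ι → Mat d), (∀ i, ‖A i‖ ≤ 1) → (∀ j, ‖B j‖ ≤ 1) →
      ‖∑ i, ∑ j, M i j • (A i * B j)‖ ≤ c) :
    matCb M ≤ c :=
  csSup_le ⟨_, 0, 0, 0, by simp, by simp, rfl⟩ <| by
    rintro _ ⟨d, A, B, hA, hB, rfl⟩
    exact h d A B hA hB

theorem abs_sum_mul_inner_le_matCb {d : ℕ} {w : ι → EuclideanSpace ℝ (Fin d)}
    (hw : ∀ k, ‖w k‖ ≤ 1) :
    |∑ k, ∑ l, M k l * ⟪w k, w l⟫| ≤ matCb M := by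
  rcases d with _ | d
  · simpa [Subsingleton.elim (w _) 0] using matCb_nonneg M
  set e : EuclideanSpace ℝ (Fin (d + 1)) := EuclideanSpace.single 0 1
  have he : ‖e‖ = 1 := by simp [e]
  have hprod : ∀ k l, rankOne ℝ e (w k) * rankOne ℝ (w l) e = ⟪w k, w l⟫ • rankOne ℝ e e :=
    fun k l => rankOne_comp_rankOne _ _ _ _
  have := norm_sum_smul_mul_le_matCb M (A := fun k => rankOne ℝ e (w k))
    (B := fun l => rankOne ℝ (w l) e) (by simpa [he] using hw) (by simpa [he] using hw)
  simp_rw [hprod, smul_smul, ← Finset.sum_smul, norm_smul, norm_rankOne, he] at this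
  simpa using this

theorem matCb_le_of_sum_mul_inner_le {c : ℝ}
    (h : ∀ (d : ℕ) (u v : ι → EuclideanSpace ℝ (Fin d)), (∀ i, ‖u i‖ ≤ 1) → (∀ j, ‖v j‖ ≤ 1) →
      ∑ i, ∑ j, M i j * ⟪u i, v j⟫ ≤ c) :
    matCb M ≤ c := by
  have hc : 0 ≤ c := by simpa using h 0 0 0 (by simp) (by simp)
  refine matCb_le M fun d A B hA hB => ?_
  set L := ∑ i, ∑ j, M i j • (A i * B j)
  refine ContinuousLinearMap.opNorm_le_of_unit_norm hc fun x hx => ?_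
  set y := ‖L x‖⁻¹ • L x
  have hy : ‖y‖ ≤ 1 := by
    rw [norm_smul, norm_inv, norm_norm]
    exact inv_mul_le_one
  have hLx : ‖L x‖ = ⟪y, L x⟫ := by
    rw [real_inner_smul_left, real_inner_self_eq_norm_sq]
    rcases eq_or_ne ‖L x‖ 0 with h0 | h0
    · simp [h0]
    · field_simp
  have hexpand : ⟪y, L x⟫ = ∑ i, ∑ j, M i j * ⟪ContinuousLinearMap.adjoint (A i) y, B j x⟫ := by
    simp [L, inner_sum, real_inner_smul_right, ContinuousLinearMap.adjoint_inner_left]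
  rw [hLx, hexpand]
  refine h d _ _ (fun i => (ContinuousLinearMap.le_opNorm _ _).trans ?_)
    (fun j => (ContinuousLinearMap.le_opNorm _ _).trans ?_)
  · rw [LinearIsometryEquiv.norm_map]
    exact mul_le_one₀ (hA i) (norm_nonneg _) hy
  · rw [hx, mul_one]
    exact hB j

end MatCb

theorem sum_mul_inner_eq_sum_coord {κ κ' : Type*} [Fintype κ] [Fintype κ'] (M : Matrix κ κ' ℝ)
    {d : ℕ} (u : κ → EuclideanSpace ℝ (Fin d)) (v : κ' → EuclideanSpace ℝ (Fin d)) :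
    ∑ k, ∑ l, M k l * ⟪u k, v l⟫ = ∑ t, ∑ k, ∑ l, M k l * u k t * v l t := by
  rw [← Finset.sum_comm_cycle]
  simp only [PiLp.inner_apply, RCLike.inner_apply, conj_trivial, Finset.mul_sum]
  exact Finset.sum_congr rfl fun k _ => Finset.sum_congr rfl fun l _ =>
    Finset.sum_congr rfl fun t _ => by ring

def IsBilinFormRep {ι : Type*} [Fintype ι] (T : Matrix (ι ⊕ ι) (ι ⊕ ι) ℝ)
    (A : Matrix ι ι ℝ) : Prop :=
  ∀ z : ι ⊕ ι → ℝ, ∑ k, ∑ l, T k l * z k * z l = ∑ i, ∑ j, A i j * z (Sum.inl i) * z (Sum.inr j)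

theorem isBilinFormRep_fromBlocks {ι : Type*} [Fintype ι] (A : Matrix ι ι ℝ) :
    IsBilinFormRep (fromBlocks 0 A 0 0) A := by
  intro z
  simp [Fintype.sum_sum_type]

theorem IsBilinFormRep.sum_mul_inner_eq {ι : Type*} [Fintype ι] {T : Matrix (ι ⊕ ι) (ι ⊕ ι) ℝ}
    {A : Matrix ι ι ℝ} (hT : IsBilinFormRep T A) {d : ℕ} (w : ι ⊕ ι → EuclideanSpace ℝ (Fin d)) :
    ∑ k, ∑ l, T k l * ⟪w k, w l⟫ = ∑ i, ∑ j, A i j * ⟪w (Sum.inl i), w (Sum.inr j)⟫ := by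
  rw [sum_mul_inner_eq_sum_coord, sum_mul_inner_eq_sum_coord]
  exact Finset.sum_congr rfl fun t _ => hT fun k => w k t

theorem matCb_le_of_isBilinFormRep {ι : Type} [Fintype ι] {A : Matrix ι ι ℝ}
    {T : Matrix (ι ⊕ ι) (ι ⊕ ι) ℝ} (hT : IsBilinFormRep T A) : matCb A ≤ matCb T := by
  refine matCb_le_of_sum_mul_inner_le A fun d u v hu hv => ?_
  have hw : ∀ k, ‖Sum.elim u v k‖ ≤ 1 := by rintro (i | j) <;> simp [hu, hv]
  have h := abs_sum_mul_inner_le_matCb T hw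
  rw [hT.sum_mul_inner_eq] at h
  simpa using (le_abs_self _).trans h

theorem matCb_fromBlocks_le {ι : Type} [Fintype ι] (A : Matrix ι ι ℝ) :
    matCb (fromBlocks 0 A 0 0) ≤ matCb A := by
  refine matCb_le _ fun d X Y hX hY => ?_
  simpa [Fintype.sum_sum_type, fun g : Mat d => zero_smul ℝ g] using
    norm_sum_smul_mul_le_matCb A (A := fun i => X (Sum.inl i)) (B := fun j => Y (Sum.inr j))
      (fun i => hX _) (fun j => hY _)

/-- For the bilinear form `p(x,y) = xᵀ A y`, viewed as a quadratic form in `2n`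
variables, the completely bounded norm of `p` (the infimum of `‖T‖_cb` over `2n × 2n`
matrices `T` representing `p`) equals the completely bounded norm of `A`. -/
theorem cb_norm_bilinear_form (n : ℕ) (A : Matrix (Fin n) (Fin n) ℝ) :
    sInf {c : ℝ | ∃ T : Matrix (Fin n ⊕ Fin n) (Fin n ⊕ Fin n) ℝ,
        (∀ z : Fin n ⊕ Fin n → ℝ,
          ∑ k, ∑ l, T k l * z k * z l =
          ∑ i : Fin n, ∑ j : Fin n, A i j * z (Sum.inl i) * z (Sum.inr j)) ∧
        c = matCb T} =
    matCb A := by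
  have hrep := isBilinFormRep_fromBlocks A
  have hcb : matCb A = matCb (fromBlocks 0 A 0 0) :=
    (matCb_le_of_isBilinFormRep hrep).antisymm (matCb_fromBlocks_le A)
  refine le_antisymm (csInf_le ⟨0, ?_⟩ ⟨_, hrep, hcb⟩) (le_csInf ⟨_, _, hrep, hcb⟩ ?_)
  · rintro _ ⟨T, -, rfl⟩
    exact matCb_nonneg T
  · rintro _ ⟨T, hT, rfl⟩
    exact matCb_le_of_isBilinFormRep hT
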